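/- On T*ℝ³, the Hamiltonian H_I = p₁²+p₂²+p₃² + a₁(2(q₁²+q₂²+q₃²)² - (2q₁q₃ - q₂²)²) Poisson-commutes with M₁ = (q₁p₂ - q₂p₁) + (q₂p₃ - q₃p₂). -/

import Mathlib

noncomputable def pb {n : ℕ} (f g : (Fin n → ℝ) × (Fin n → ℝ) → ℝ)
    (x : (Fin n → ℝ) × (Fin n → ℝ)) : ℝ :=
  ∑ i : Fin n,
    (fderiv ℝ f x (Pi.single i 1, 0) * fderiv ℝ g x (0, Pi.single i 1)
      - fderiv ℝ f x (0, Pi.single i 1) * fderiv ℝ g x (Pi.single i 1, 0))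

noncomputable def HI (a1 : ℝ) : (Fin 3 → ℝ) × (Fin 3 → ℝ) → ℝ :=
  fun x => (x.2 0)^2 + (x.2 1)^2 + (x.2 2)^2
    + a1 * (2 * ((x.1 0)^2 + (x.1 1)^2 + (x.1 2)^2)^2
      - (2 * x.1 0 * x.1 2 - (x.1 1)^2)^2)
noncomputable def M1 : (Fin 3 → ℝ) × (Fin 3 → ℝ) → ℝ :=
  fun x => (x.1 0 * x.2 1 - x.1 1 * x.2 0) + (x.1 1 * x.2 2 - x.1 2 * x.2 1)

open Matrix

/-!
The Poisson bracket with `M1` is the derivative along the Hamiltonian vector field of `M1`,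
which is the infinitesimal rotation `(q, p) ↦ (J q, J p)` for the skew-symmetric matrix
`J = [[0,-1,0],[1,0,-1],[0,1,0]]`. `HI` is a function of `p ⬝ p`, `q ⬝ q` and the quadratic form
`2 q₁ q₃ - q₂²`, whose symmetric matrix commutes with `J`; all three are therefore annihilated by
this rotation.
-/

section PhaseSpace

variable {n : ℕ}

noncomputable def hamiltonianVectorField (g : (Fin n → ℝ) × (Fin n → ℝ) → ℝ)
    (x : (Fin n → ℝ) × (Fin n → ℝ)) : (Fin n → ℝ) × (Fin n → ℝ) :=
  (fun i => fderiv ℝ g x (0, Pi.single i 1), fun i => -fderiv ℝ g x (Pi.single i 1, 0))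

lemma prod_eq_sum_single (v : (Fin n → ℝ) × (Fin n → ℝ)) :
    v = ∑ i, (v.1 i • (Pi.single i 1, 0) + v.2 i • (0, Pi.single i 1)) := by
  ext i <;> simp [Prod.fst_sum, Prod.snd_sum, Finset.sum_apply, Pi.single_apply]

theorem pb_eq_fderiv_hamiltonianVectorField (f g : (Fin n → ℝ) × (Fin n → ℝ) → ℝ)
    (x : (Fin n → ℝ) × (Fin n → ℝ)) :
    pb f g x = fderiv ℝ f x (hamiltonianVectorField g x) := by
  rw [prod_eq_sum_single (hamiltonianVectorField g x), map_sum]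
  simp only [pb, hamiltonianVectorField, map_add, map_smul, smul_eq_mul]
  congr 1 with i
  ring

lemma hasFDerivAt_fst_apply (i : Fin n) (x : (Fin n → ℝ) × (Fin n → ℝ)) :
    HasFDerivAt (fun y : (Fin n → ℝ) × (Fin n → ℝ) => y.1 i)
      ((ContinuousLinearMap.proj i).comp (ContinuousLinearMap.fst ℝ _ _)) x := by
  fun_prop

lemma hasFDerivAt_snd_apply (i : Fin n) (x : (Fin n → ℝ) × (Fin n → ℝ)) :
    HasFDerivAt (fun y : (Fin n → ℝ) × (Fin n → ℝ) => y.2 i)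
      ((ContinuousLinearMap.proj i).comp (ContinuousLinearMap.snd ℝ _ _)) x := by
  fun_prop

end PhaseSpace

def rotM1 (q : Fin 3 → ℝ) : Fin 3 → ℝ := ![-q 1, q 0 - q 2, q 1]

def conicForm (q v : Fin 3 → ℝ) : ℝ := q 0 * v 2 + q 2 * v 0 - q 1 * v 1

lemma dotProduct_rotM1_self (q : Fin 3 → ℝ) : q ⬝ᵥ rotM1 q = 0 := by
  simp only [dotProduct, rotM1, Fin.sum_univ_three, cons_val_zero, cons_val_one, cons_val]
  ring

lemma conicForm_rotM1_self (q : Fin 3 → ℝ) : conicForm q (rotM1 q) = 0 := by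
  simp only [conicForm, rotM1, cons_val_zero, cons_val_one, cons_val]
  ring

lemma fderiv_M1_apply (x v : (Fin 3 → ℝ) × (Fin 3 → ℝ)) :
    fderiv ℝ M1 x v = rotM1 x.1 ⬝ᵥ v.2 - rotM1 x.2 ⬝ᵥ v.1 := by
  have hq := fun i => hasFDerivAt_fst_apply i x
  have hp := fun i => hasFDerivAt_snd_apply i x
  have h : HasFDerivAt M1 _ x :=
    (((hq 0).mul (hp 1)).sub ((hq 1).mul (hp 0))).add (((hq 1).mul (hp 2)).sub ((hq 2).mul (hp 1)))
  rw [h.fderiv]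
  simp only [_root_.add_apply, _root_.sub_apply, _root_.smul_apply, smul_eq_mul,
    ContinuousLinearMap.comp_apply, ContinuousLinearMap.coe_fst', ContinuousLinearMap.coe_snd',
    ContinuousLinearMap.proj_apply, dotProduct, rotM1, Fin.sum_univ_three, cons_val_zero,
    cons_val_one, cons_val]
  ring

lemma hamiltonianVectorField_M1 (x : (Fin 3 → ℝ) × (Fin 3 → ℝ)) :
    hamiltonianVectorField M1 x = (rotM1 x.1, rotM1 x.2) := by
  ext i <;> fin_cases i <;>
    simp [hamiltonianVectorField, fderiv_M1_apply, rotM1, dotProduct, Fin.sum_univ_three]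

lemma fderiv_HI_apply (a1 : ℝ) (x v : (Fin 3 → ℝ) × (Fin 3 → ℝ)) :
    fderiv ℝ (HI a1) x v = 2 * (x.2 ⬝ᵥ v.2)
      + a1 * (8 * (x.1 ⬝ᵥ x.1) * (x.1 ⬝ᵥ v.1) - 4 * conicForm x.1 x.1 * conicForm x.1 v.1) := by
  have hq := fun i => hasFDerivAt_fst_apply i x
  have hp := fun i => hasFDerivAt_snd_apply i x
  have hnormq := (((hq 0).pow 2).add ((hq 1).pow 2)).add ((hq 2).pow 2)
  have hconic := (((hq 0).const_mul 2).mul (hq 2)).sub ((hq 1).pow 2)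
  have h : HasFDerivAt (HI a1) _ x :=
    ((((hp 0).pow 2).add ((hp 1).pow 2)).add ((hp 2).pow 2)).add
      ((((hnormq.pow 2).const_mul 2).sub (hconic.pow 2)).const_mul a1)
  rw [h.fderiv]
  simp only [Pi.add_apply, Pi.sub_apply, Pi.mul_apply, _root_.add_apply, _root_.sub_apply,
    _root_.smul_apply, smul_eq_mul, nsmul_eq_mul, ContinuousLinearMap.comp_apply,
    ContinuousLinearMap.coe_fst', ContinuousLinearMap.coe_snd', ContinuousLinearMap.proj_apply,
    dotProduct, Fin.sum_univ_three, conicForm]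
  ring

theorem HI_commutes_M1 (a1 : ℝ) : ∀ x, pb (HI a1) M1 x = 0 := by
  intro x
  rw [pb_eq_fderiv_hamiltonianVectorField, hamiltonianVectorField_M1, fderiv_HI_apply,
    dotProduct_rotM1_self, dotProduct_rotM1_self, conicForm_rotM1_self]
  ring
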